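/- arXiv:2103.15710 — 3 statements merged into one kernel-verified Lean document; each statement's English description precedes it below -/
import Mathlib

section
/- Uniqueness of solutions for the linear-union traffic system (instance of the paper's Uniqueness Lemma for the differential equations of the model): fix V₀, T, l, L₁, L₂ > 0 and constants f₁, g₂, π ∈ ℝ, and let F(k₁, k₂) = ((f₁ − π·min(d(k₁), s(k₂)))/L₁, (π·min(d(k₁), s(k₂)) − g₂)/L₂). If r ≥ 0 and x, y : [0, r] → ℝ² are two solutions of the ODE z'(t) = F(z(t)) on [0, r] with x(0) = y(0), then x(t) = y(t) for every t ∈ [0, r]; i.e., for each initial state and each duration there is at most one flow of the system. -/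
/-!
The right-hand side `F` is globally Lipschitz, so uniqueness follows from the Grönwall-type
uniqueness theorem for ODEs. The point is that the triangular diagram `Q` is continuous at the
critical density: its two branches `V₀ ρ` and `(1 - ρ l) / T` cross exactly at
`ρ_c = 1 / (V₀ T + l)`, so `Q` is the minimum of two affine functions. Demand and supply are
`Q` composed with the 1-Lipschitz clamps `min · ρ_c` and `max · ρ_c`, and `F` is an affine image
of `min (d k₁) (s k₂)`.
-/

open Set
open scoped NNReal

theorem ODE_solution_unique_of_hasDerivAt_Icc {E : Type*} [NormedAddCommGroup E]
    [NormedSpace ℝ E] {F : E → E} {K : ℝ≥0} (hF : LipschitzWith K F) {x y : ℝ → E} {a b : ℝ}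
    (hx : ∀ t ∈ Icc a b, HasDerivAt x (F (x t)) t) (hy : ∀ t ∈ Icc a b, HasDerivAt y (F (y t)) t)
    (h : x a = y a) : EqOn x y (Icc a b) :=
  ODE_solution_unique (v := fun _ => F) (fun _ => hF) (HasDerivAt.continuousOn hx)
    (fun t ht => (hx t (Ico_subset_Icc_self ht)).hasDerivWithinAt) (HasDerivAt.continuousOn hy)
    (fun t ht => (hy t (Ico_subset_Icc_self ht)).hasDerivWithinAt) h

theorem lipschitzWith_smul_add {E : Type*} [SeminormedAddCommGroup E] [NormedSpace ℝ E]
    (v c : E) : LipschitzWith ‖v‖₊ fun t : ℝ => t • v + c :=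
  LipschitzWith.of_dist_le_mul fun s t => by
    rw [dist_add_right, dist_eq_norm, ← sub_smul, norm_smul, mul_comm, Real.dist_eq,
      Real.norm_eq_abs, coe_nnnorm]

theorem lipschitzWith_min_demand_supply {K : ℝ≥0} {Q : ℝ → ℝ} (hQ : LipschitzWith K Q)
    (ρc : ℝ) : LipschitzWith K fun k : ℝ × ℝ => min (Q (min k.1 ρc)) (Q (max k.2 ρc)) := by
  have hd : LipschitzWith K fun ρ => Q (min ρ ρc) := by
    rw [← mul_one K]; exact hQ.comp (LipschitzWith.id.min_const ρc)
  have hs : LipschitzWith K fun ρ => Q (max ρ ρc) := by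
    rw [← mul_one K]; exact hQ.comp (LipschitzWith.id.max_const ρc)
  rw [← max_self K, ← mul_one K]
  exact (hd.comp LipschitzWith.prod_fst).min (hs.comp LipschitzWith.prod_snd)

section TriangularDiagram

variable {V₀ T l : ℝ}

theorem free_flow_le_congested_iff (hT : 0 < T) (hc : 0 < V₀ * T + l) {ρ : ℝ} :
    V₀ * ρ ≤ 1 / T * (1 - ρ * l) ↔ ρ ≤ 1 / (V₀ * T + l) := by
  rw [one_div_mul_eq_div, le_div_iff₀ hT, le_div_iff₀ hc]
  constructor <;> intro h <;> linarith

theorem triangular_flow_eq_min (hT : 0 < T) (hc : 0 < V₀ * T + l) (ρ : ℝ) :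
    (if ρ ≤ 1 / (V₀ * T + l) then V₀ * ρ else 1 / T * (1 - ρ * l)) =
      min (V₀ * ρ) (1 / T * (1 - ρ * l)) := by
  rw [min_def]
  exact if_congr (free_flow_le_congested_iff hT hc).symm rfl rfl

theorem lipschitzWith_triangular_flow (hT : 0 < T) (hc : 0 < V₀ * T + l) :
    LipschitzWith (max ‖V₀‖₊ ‖-(l / T)‖₊)
      fun ρ => if ρ ≤ 1 / (V₀ * T + l) then V₀ * ρ else 1 / T * (1 - ρ * l) := by
  have hfree : (fun ρ : ℝ => V₀ * ρ) = fun ρ => ρ • V₀ + 0 := by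
    funext ρ; rw [smul_eq_mul, add_zero, mul_comm]
  have hcong : (fun ρ : ℝ => 1 / T * (1 - ρ * l)) = fun ρ => ρ • -(l / T) + 1 / T := by
    funext ρ; rw [smul_eq_mul]; ring
  simp_rw [triangular_flow_eq_min hT hc]
  exact (hfree ▸ lipschitzWith_smul_add V₀ 0).min (hcong ▸ lipschitzWith_smul_add _ _)

end TriangularDiagram

theorem linear_union_uniqueness_general
    (V₀ T l L₁ L₂ : ℝ) (hV : 0 < V₀) (hT : 0 < T) (hl : 0 < l)
    (f₁ g₂ π : ℝ)
    (ρc : ℝ) (hρc : ρc = 1 / (V₀ * T + l))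
    (Q : ℝ → ℝ)
    (hQ : ∀ ρ, Q ρ = if ρ ≤ ρc then V₀ * ρ else (1 / T) * (1 - ρ * l))
    (d s : ℝ → ℝ)
    (hd : ∀ ρ, d ρ = Q (min ρ ρc))
    (hs : ∀ ρ, s ρ = Q (max ρ ρc))
    (F : ℝ × ℝ → ℝ × ℝ)
    (hF : ∀ k : ℝ × ℝ,
      F k = ((f₁ - π * min (d k.1) (s k.2)) / L₁,
             (π * min (d k.1) (s k.2) - g₂) / L₂))
    (r : ℝ)
    (x y : ℝ → ℝ × ℝ)
    (hx : ∀ t ∈ Set.Icc (0 : ℝ) r, HasDerivAt x (F (x t)) t)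
    (hy : ∀ t ∈ Set.Icc (0 : ℝ) r, HasDerivAt y (F (y t)) t)
    (h0 : x 0 = y 0) :
    ∀ t ∈ Set.Icc (0 : ℝ) r, x t = y t := by
  have hQ_lip : LipschitzWith (max ‖V₀‖₊ ‖-(l / T)‖₊) Q := by
    rw [funext hQ, hρc]
    exact lipschitzWith_triangular_flow hT (by positivity)
  have hF_affine : F = (fun t : ℝ => t • (-π / L₁, π / L₂) + (f₁ / L₁, -g₂ / L₂)) ∘
      fun k => min (Q (min k.1 ρc)) (Q (max k.2 ρc)) := by
    funext k
    rw [Function.comp_apply, hF, ← hd, ← hs, Prod.smul_mk, Prod.mk_add_mk, smul_eq_mul,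
      smul_eq_mul]
    congr 1 <;> ring
  have hF_lip := (lipschitzWith_smul_add (-π / L₁, π / L₂) (f₁ / L₁, -g₂ / L₂)).comp
    (lipschitzWith_min_demand_supply hQ_lip ρc)
  rw [← hF_affine] at hF_lip
  exact ODE_solution_unique_of_hasDerivAt_Icc hF_lip hx hy h0

/-- uniqueness of solutions for the linear-union traffic system. Two
solutions of `z' = F(z)` on `[0, r]` with the same initial state agree on `[0, r]`:
for each initial state and each duration there is at most one flow of the system. -/
theorem linear_union_uniqueness
    (V₀ T l L₁ L₂ : ℝ) (hV : 0 < V₀) (hT : 0 < T) (hl : 0 < l)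
    (hL₁ : 0 < L₁) (hL₂ : 0 < L₂)
    (f₁ g₂ π : ℝ)
    (ρc : ℝ) (hρc : ρc = 1 / (V₀ * T + l))
    (Q : ℝ → ℝ)
    (hQ : ∀ ρ, Q ρ = if ρ ≤ ρc then V₀ * ρ else (1 / T) * (1 - ρ * l))
    (d s : ℝ → ℝ)
    (hd : ∀ ρ, d ρ = Q (min ρ ρc))
    (hs : ∀ ρ, s ρ = Q (max ρ ρc))
    (F : ℝ × ℝ → ℝ × ℝ)
    (hF : ∀ k : ℝ × ℝ,
      F k = ((f₁ - π * min (d k.1) (s k.2)) / L₁,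
             (π * min (d k.1) (s k.2) - g₂) / L₂))
    (r : ℝ) (hr : 0 ≤ r)
    (x y : ℝ → ℝ × ℝ)
    (hx : ∀ t ∈ Set.Icc (0 : ℝ) r, HasDerivAt x (F (x t)) t)
    (hy : ∀ t ∈ Set.Icc (0 : ℝ) r, HasDerivAt y (F (y t)) t)
    (h0 : x 0 = y 0) :
    ∀ t ∈ Set.Icc (0 : ℝ) r, x t = y t :=
  linear_union_uniqueness_general V₀ T l L₁ L₂ hV hT hl f₁ g₂ π ρc hρc Q hQ d s hd hs F hF r x y hx
    hy h0
end

section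
/- Nonnegativity of the upstream density is invariant in the linear-union model: fix V₀, T, l, L₁, L₂ > 0, a constant inflow f₁ ≥ 0, a constant outflow g₂ ∈ ℝ, and π ∈ [0, 1]. Suppose k₁, k₂ : [0, r] → ℝ are differentiable and satisfy k₁'(t) = (f₁ − π·min(d(k₁(t)), s(k₂(t))))/L₁ and k₂'(t) = (π·min(d(k₁(t)), s(k₂(t))) − g₂)/L₂ on [0, r], with k₁(0) ≥ 0. Then k₁(t) ≥ 0 for all t ∈ [0, r]. -/
/-!
Below the critical density the demand is the free-flow branch `V₀ ρ`, and above it the demand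
is capped, so `d ρ ≤ V₀ ρ` everywhere. Hence the upstream density satisfies the linear
differential inequality `k₁' ≥ -(π V₀ / L₁) k₁`, and Grönwall's inequality applied to `-k₁`
keeps `k₁` from becoming negative.
-/

open Set

theorem nonneg_of_hasDerivWithinAt_of_mul_le {f f' : ℝ → ℝ} {a b c : ℝ}
    (hf : ContinuousOn f (Icc a b)) (hf' : ∀ x ∈ Ico a b, HasDerivWithinAt f (f' x) (Ici x) x)
    (bound : ∀ x ∈ Ico a b, c * f x ≤ f' x) (ha : 0 ≤ f a) :
    ∀ x ∈ Icc a b, 0 ≤ f x := by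
  have hgronwall := le_gronwallBound_of_liminf_deriv_right_le (δ := 0) (K := c) (ε := 0)
    hf.neg (fun x hx _ hr => (hf' x hx).neg.liminf_right_slope_le hr) (by simpa using ha)
    (fun x hx => by simpa using bound x hx)
  intro x hx
  simpa [gronwallBound_ε0_δ0] using hgronwall x hx

theorem demand_le_freeFlow {V₀ ρc : ℝ} {Q d : ℝ → ℝ} (hV : 0 ≤ V₀)
    (hQ : ∀ ρ ≤ ρc, Q ρ = V₀ * ρ) (hd : ∀ ρ, d ρ = Q (min ρ ρc)) (ρ : ℝ) :
    d ρ ≤ V₀ * ρ := by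
  rw [hd, hQ _ (min_le_right ρ ρc)]
  exact mul_le_mul_of_nonneg_left (min_le_left ρ ρc) hV

theorem neg_mul_le_inflow_sub_transfer {f₁ π V₀ L₁ k m : ℝ} (hf₁ : 0 ≤ f₁) (hπ : 0 ≤ π)
    (hL₁ : 0 < L₁) (hm : m ≤ V₀ * k) :
    -(π * V₀ / L₁) * k ≤ (f₁ - π * m) / L₁ := by
  rw [show -(π * V₀ / L₁) * k = -(π * (V₀ * k)) / L₁ by ring]
  gcongr
  nlinarith [mul_le_mul_of_nonneg_left hm hπ]

theorem linear_union_density_nonneg_invariant_general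
    (V₀ T l L₁ : ℝ) (hV : 0 < V₀)
    (hL₁ : 0 < L₁)
    (f₁ π : ℝ) (hf₁ : 0 ≤ f₁) (hπ₀ : 0 ≤ π)
    (ρc : ℝ)
    (Q : ℝ → ℝ)
    (hQ : ∀ ρ, Q ρ = if ρ ≤ ρc then V₀ * ρ else (1 / T) * (1 - ρ * l))
    (d s : ℝ → ℝ)
    (hd : ∀ ρ, d ρ = Q (min ρ ρc))
    (r : ℝ)
    (k₁ k₂ : ℝ → ℝ)
    (hk₁ : ∀ t ∈ Set.Icc (0 : ℝ) r,
      HasDerivAt k₁ ((f₁ - π * min (d (k₁ t)) (s (k₂ t))) / L₁) t)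
    (h0 : 0 ≤ k₁ 0) :
    ∀ t ∈ Set.Icc (0 : ℝ) r, 0 ≤ k₁ t := by
  have hdemand : ∀ ρ, d ρ ≤ V₀ * ρ :=
    demand_le_freeFlow hV.le (fun ρ hρ => by rw [hQ, if_pos hρ]) hd
  refine nonneg_of_hasDerivWithinAt_of_mul_le (c := -(π * V₀ / L₁))
    (fun t ht => (hk₁ t ht).continuousAt.continuousWithinAt)
    (fun t ht => (hk₁ t (Ico_subset_Icc_self ht)).hasDerivWithinAt) (fun t _ => ?_) h0
  exact neg_mul_le_inflow_sub_transfer hf₁ hπ₀ hL₁ ((min_le_left _ _).trans (hdemand _))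

/-- nonnegativity of the upstream density is invariant in the
linear-union model: if `f₁ ≥ 0`, `π ∈ [0,1]` and `k₁(0) ≥ 0`, then `k₁(t) ≥ 0`
for all `t ∈ [0, r]`. -/
theorem linear_union_density_nonneg_invariant
    (V₀ T l L₁ L₂ : ℝ) (hV : 0 < V₀) (hT : 0 < T) (hl : 0 < l)
    (hL₁ : 0 < L₁) (hL₂ : 0 < L₂)
    (f₁ g₂ π : ℝ) (hf₁ : 0 ≤ f₁) (hπ₀ : 0 ≤ π) (hπ₁ : π ≤ 1)
    (ρc : ℝ) (hρc : ρc = 1 / (V₀ * T + l))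
    (Q : ℝ → ℝ)
    (hQ : ∀ ρ, Q ρ = if ρ ≤ ρc then V₀ * ρ else (1 / T) * (1 - ρ * l))
    (d s : ℝ → ℝ)
    (hd : ∀ ρ, d ρ = Q (min ρ ρc))
    (hs : ∀ ρ, s ρ = Q (max ρ ρc))
    (r : ℝ)
    (k₁ k₂ : ℝ → ℝ)
    (hk₁ : ∀ t ∈ Set.Icc (0 : ℝ) r,
      HasDerivAt k₁ ((f₁ - π * min (d (k₁ t)) (s (k₂ t))) / L₁) t)
    (hk₂ : ∀ t ∈ Set.Icc (0 : ℝ) r,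
      HasDerivAt k₂ ((π * min (d (k₁ t)) (s (k₂ t)) - g₂) / L₂) t)
    (h0 : 0 ≤ k₁ 0) :
    ∀ t ∈ Set.Icc (0 : ℝ) r, 0 ≤ k₁ t :=
  linear_union_density_nonneg_invariant_general V₀ T l L₁ hV hL₁ f₁ π hf₁ hπ₀ ρc Q hQ d s hd r k₁ k₂
    hk₁ h0
end

section
/- The jam density is an invariant upper bound for the downstream density in the linear-union model: fix V₀, T, l, L₁, L₂ > 0, a constant inflow f₁ ∈ ℝ, a constant outflow g₂ ≥ 0, and π ∈ [0, 1]. Suppose k₁, k₂ : [0, r] → ℝ are differentiable and satisfy k₁'(t) = (f₁ − π·min(d(k₁(t)), s(k₂(t))))/L₁ and k₂'(t) = (π·min(d(k₁(t)), s(k₂(t))) − g₂)/L₂ on [0, r], with k₂(0) ≤ 1/l. Then k₂(t) ≤ 1/l for all t ∈ [0, r]. -/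
/-!
Beyond the jam density `1/l`, which exceeds the critical density, the supply `s` is nonpositive,
so whenever `k₂ ≥ 1/l` the flux `π · min(d, s)` into the downstream lane is nonpositive and, with
the outflow `g₂ ≥ 0`, `k₂` cannot increase. A barrier argument then keeps `k₂` below `1/l`.
-/

open Set

theorem image_le_of_deriv_right_nonpos_where_ge {f f' : ℝ → ℝ} {a b M : ℝ}
    (hf : ContinuousOn f (Icc a b))
    (hf' : ∀ x ∈ Ico a b, HasDerivWithinAt f (f' x) (Ici x) x)
    (ha : f a ≤ M) (hbound : ∀ x ∈ Ico a b, M ≤ f x → f' x ≤ 0) :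
    ∀ x ∈ Icc a b, f x ≤ M := by
  -- compare with the tilted barriers `M + ε (x - a)` and let `ε → 0`
  have tilted : ∀ ε > 0, ∀ x ∈ Icc a b, f x ≤ M + ε * (x - a) := by
    intro ε hε
    have hB : ∀ x, HasDerivAt (fun y => M + ε * (y - a)) ε x := fun x => by
      simpa using (((hasDerivAt_id x).sub_const a).const_mul ε).const_add M
    refine image_le_of_deriv_right_lt_deriv_boundary hf hf' (by simpa using ha) hB ?_
    intro x hx hfx
    have hMx : M ≤ f x := by nlinarith [hx.1]
    exact (hbound x hx hMx).trans_lt hε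
  intro x hx
  refine le_of_forall_pos_le_add fun δ hδ => ?_
  have hxa : 0 ≤ x - a := sub_nonneg.2 hx.1
  have hε : 0 < δ / (x - a + 1) := by positivity
  calc f x ≤ M + δ / (x - a + 1) * (x - a) := tilted _ hε x hx
    _ ≤ M + δ / (x - a + 1) * (x - a + 1) := by gcongr; linarith
    _ = M + δ := by rw [div_mul_cancel₀ _ (by positivity)]

noncomputable section

namespace TrafficFlow

variable {V₀ T l : ℝ}

def criticalDensity (V₀ T l : ℝ) : ℝ := 1 / (V₀ * T + l)

def triangularFlow (V₀ T l ρ : ℝ) : ℝ :=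
  if ρ ≤ criticalDensity V₀ T l then V₀ * ρ else (1 / T) * (1 - ρ * l)

def supply (V₀ T l ρ : ℝ) : ℝ := triangularFlow V₀ T l (max ρ (criticalDensity V₀ T l))

theorem criticalDensity_lt_jam (hV : 0 < V₀) (hT : 0 < T) (hl : 0 < l) :
    criticalDensity V₀ T l < 1 / l :=
  one_div_lt_one_div_of_lt hl (lt_add_of_pos_left l (mul_pos hV hT))

theorem supply_nonpos_of_jam_le (hV : 0 < V₀) (hT : 0 < T) (hl : 0 < l) {ρ : ℝ}
    (hρ : 1 / l ≤ ρ) : supply V₀ T l ρ ≤ 0 := by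
  have hcρ : criticalDensity V₀ T l < ρ := (criticalDensity_lt_jam hV hT hl).trans_le hρ
  have hjam : 1 ≤ ρ * l := by rwa [div_le_iff₀ hl] at hρ
  rw [supply, max_eq_left hcρ.le, triangularFlow, if_neg hcρ.not_ge]
  exact mul_nonpos_of_nonneg_of_nonpos (by positivity) (by linarith)

end TrafficFlow

end

theorem linear_union_jam_density_invariant_general
    (V₀ T l L₂ : ℝ) (hV : 0 < V₀) (hT : 0 < T) (hl : 0 < l)
    (hL₂ : 0 < L₂)
    (g₂ π : ℝ) (hg₂ : 0 ≤ g₂) (hπ₀ : 0 ≤ π)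
    (ρc : ℝ) (hρc : ρc = 1 / (V₀ * T + l))
    (Q : ℝ → ℝ)
    (hQ : ∀ ρ, Q ρ = if ρ ≤ ρc then V₀ * ρ else (1 / T) * (1 - ρ * l))
    (d s : ℝ → ℝ)
    (hs : ∀ ρ, s ρ = Q (max ρ ρc))
    (r : ℝ)
    (k₁ k₂ : ℝ → ℝ)
    (hk₂ : ∀ t ∈ Set.Icc (0 : ℝ) r,
      HasDerivAt k₂ ((π * min (d (k₁ t)) (s (k₂ t)) - g₂) / L₂) t)
    (h0 : k₂ 0 ≤ 1 / l) :
    ∀ t ∈ Set.Icc (0 : ℝ) r, k₂ t ≤ 1 / l := by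
  have hs_supply : s = TrafficFlow.supply V₀ T l := by
    funext ρ
    rw [hs, hQ, hρc]
    rfl
  subst hs_supply
  refine image_le_of_deriv_right_nonpos_where_ge
    (fun x hx => (hk₂ x hx).continuousAt.continuousWithinAt)
    (fun x hx => (hk₂ x (Ico_subset_Icc_self hx)).hasDerivWithinAt) h0 ?_
  intro x _ hjam
  have hflux : π * min (d (k₁ x)) (TrafficFlow.supply V₀ T l (k₂ x)) ≤ 0 :=
    mul_nonpos_of_nonneg_of_nonpos hπ₀
      ((min_le_right _ _).trans (TrafficFlow.supply_nonpos_of_jam_le hV hT hl hjam))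
  exact div_nonpos_of_nonpos_of_nonneg (by linarith) hL₂.le

/-- the jam density `1/l` is an invariant upper bound for the
downstream density in the linear-union model: if `g₂ ≥ 0`, `π ∈ [0,1]` and
`k₂(0) ≤ 1/l`, then `k₂(t) ≤ 1/l` for all `t ∈ [0, r]`. -/
theorem linear_union_jam_density_invariant
    (V₀ T l L₁ L₂ : ℝ) (hV : 0 < V₀) (hT : 0 < T) (hl : 0 < l)
    (hL₁ : 0 < L₁) (hL₂ : 0 < L₂)
    (f₁ g₂ π : ℝ) (hg₂ : 0 ≤ g₂) (hπ₀ : 0 ≤ π) (hπ₁ : π ≤ 1)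
    (ρc : ℝ) (hρc : ρc = 1 / (V₀ * T + l))
    (Q : ℝ → ℝ)
    (hQ : ∀ ρ, Q ρ = if ρ ≤ ρc then V₀ * ρ else (1 / T) * (1 - ρ * l))
    (d s : ℝ → ℝ)
    (hd : ∀ ρ, d ρ = Q (min ρ ρc))
    (hs : ∀ ρ, s ρ = Q (max ρ ρc))
    (r : ℝ)
    (k₁ k₂ : ℝ → ℝ)
    (hk₁ : ∀ t ∈ Set.Icc (0 : ℝ) r,
      HasDerivAt k₁ ((f₁ - π * min (d (k₁ t)) (s (k₂ t))) / L₁) t)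
    (hk₂ : ∀ t ∈ Set.Icc (0 : ℝ) r,
      HasDerivAt k₂ ((π * min (d (k₁ t)) (s (k₂ t)) - g₂) / L₂) t)
    (h0 : k₂ 0 ≤ 1 / l) :
    ∀ t ∈ Set.Icc (0 : ℝ) r, k₂ t ≤ 1 / l :=
  linear_union_jam_density_invariant_general V₀ T l L₂ hV hT hl hL₂ g₂ π hg₂ hπ₀ ρc hρc Q hQ d s hs
    r k₁ k₂ hk₂ h0
end
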